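/- Let G > 0 and Δ > 0, and let m : (0,∞) → (0,∞) and α : (0,∞) → ℝ be differentiable, and define r(R,t) = (2G m(R))^{1/3} · ((9/4)(t − α(R))² + Δ)^{1/3}. Then at the time t = α(R) + (2/3)√Δ one has ∂_R r / r = m'(R)/(3 m(R)) − α'(R)/(2√Δ). In particular, if m'(R) > 0 and m(R) α'(R)/m'(R) > (2/3)√Δ, then ∂_R r(R, α(R) + (2/3)√Δ) < 0. -/

import Mathlib

open Real

/-! At the time `t₀ = α(R) + (2/3)√Δ` the bounce factor `(9/4)(t₀ − α)² + Δ` equals `2Δ`, so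
logarithmic differentiation of the two cube roots gives `∂_R r / r = m'/(3m) − α'/(2√Δ)` at
once. Since `r > 0`, `∂_R r` has the sign of this expression, and for `m' > 0` it is negative
exactly when `m α'/m' > (2/3)√Δ`. -/

theorem HasDerivAt.rpow_const_of_pos {f : ℝ → ℝ} {f' x : ℝ} (p : ℝ)
    (hf : HasDerivAt f f' x) (hx : 0 < f x) :
    HasDerivAt (fun y => f y ^ p) (p * (f' / f x) * f x ^ p) x := by
  convert hf.rpow_const (p := p) (Or.inl hx.ne') using 1
  rw [rpow_sub_one hx.ne']
  field_simp

theorem HasDerivAt.mul_rpow_const_of_pos {f g : ℝ → ℝ} {f' g' x : ℝ} (p : ℝ)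
    (hf : HasDerivAt f f' x) (hg : HasDerivAt g g' x) (hfx : 0 < f x) (hgx : 0 < g x) :
    HasDerivAt (fun y => f y ^ p * g y ^ p)
      (p * (f' / f x + g' / g x) * (f x ^ p * g x ^ p)) x :=
  ((hf.rpow_const_of_pos p hfx).mul (hg.rpow_const_of_pos p hgx)).congr_deriv (by ring)

theorem hasDerivAt_bounce_factor (Δ t : ℝ) {α : ℝ → ℝ} {α' R : ℝ} (hα : HasDerivAt α α' R) :
    HasDerivAt (fun R' => 9 / 4 * (t - α R') ^ 2 + Δ) (-(9 / 2) * (t - α R) * α') R :=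
  ((((hα.const_sub t).pow 2).const_mul (9 / 4)).add_const Δ).congr_deriv (by push_cast; ring)

theorem radial_derivative_after_bounce
    (G Δ : ℝ) (hG : 0 < G) (hΔ : 0 < Δ)
    (m α : ℝ → ℝ)
    (hmpos : ∀ R, 0 < R → 0 < m R)
    (hmdiff : ∀ R, 0 < R → DifferentiableAt ℝ m R)
    (hαdiff : ∀ R, 0 < R → DifferentiableAt ℝ α R)
    (r : ℝ → ℝ → ℝ)
    (hr : ∀ R t, r R t =
      (2 * G * m R) ^ ((1:ℝ)/3) * ((9/4) * (t - α R) ^ 2 + Δ) ^ ((1:ℝ)/3)) :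
    ∀ R, 0 < R →
      deriv (fun R' => r R' (α R + (2/3) * Real.sqrt Δ)) R
          / r R (α R + (2/3) * Real.sqrt Δ) =
        deriv m R / (3 * m R) - deriv α R / (2 * Real.sqrt Δ) ∧
      (0 < deriv m R → (2/3) * Real.sqrt Δ < m R * deriv α R / deriv m R →
        deriv (fun R' => r R' (α R + (2/3) * Real.sqrt Δ)) R < 0) := by
  intro R hR
  set t₀ := α R + 2 / 3 * √Δ
  have ht₀ : t₀ - α R = 2 / 3 * √Δ := by ring
  have hm : 0 < m R := hmpos R hR
  have hmass : HasDerivAt (fun R' => 2 * G * m R') (2 * G * deriv m R) R :=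
    (hmdiff R hR).hasDerivAt.const_mul (2 * G)
  have hbounce := hasDerivAt_bounce_factor Δ t₀ (hαdiff R hR).hasDerivAt
  have hfactor : 9 / 4 * (t₀ - α R) ^ 2 + Δ = 2 * Δ := by
    rw [ht₀, mul_pow, sq_sqrt hΔ.le]
    ring
  have hderiv := hmass.mul_rpow_const_of_pos (1 / 3) hbounce (by positivity) (by positivity)
  simp only [← hr] at hderiv
  have hlog : 1 / 3 * (2 * G * deriv m R / (2 * G * m R) + -(9 / 2) * (t₀ - α R) * deriv α R /
      (9 / 4 * (t₀ - α R) ^ 2 + Δ)) = deriv m R / (3 * m R) - deriv α R / (2 * √Δ) := by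
    rw [hfactor, ht₀]
    field_simp
    linear_combination (-9 * m R * deriv α R) * sq_sqrt hΔ.le
  rw [hlog] at hderiv
  have hrpos : 0 < r R t₀ := by rw [hr]; positivity
  refine ⟨by rw [hderiv.deriv, mul_div_cancel_right₀ _ hrpos.ne'], fun hm' hlt => ?_⟩
  have hneg : deriv m R / (3 * m R) - deriv α R / (2 * √Δ) < 0 := by
    rw [lt_div_iff₀ hm'] at hlt
    rw [sub_neg, div_lt_div_iff₀ (by positivity) (by positivity)]
    linarith
  rw [hderiv.deriv]
  exact mul_neg_of_neg_of_pos hneg hrpos
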